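/- Let φ₁, φ₂ : ℝ → ℝ be smooth and nowhere zero with φ₁ and φ₂ both constant, say φ₁ ≡ k₁ and φ₂ ≡ k₂ with k₁, k₂ ∈ ℝ \ {0}, and define f₁(x¹,x²) = k₁, f₂(x¹,x²) = k₂. Let W¹, W² : ℝ → ℝ be smooth functions such that (V¹, V²) with V¹(x¹,x²) = W¹(x²), V²(x¹,x²) = W²(x¹) satisfies the Killing system for (f₁, f₂). Then there exist k, c₁, c₂ ∈ ℝ such that W¹(t) = k·k₁·t + c₁ for all t and W²(s) = −k·k₂·s + c₂ for all s. -/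

import Mathlib

open Real

/-- Partial derivative in the `x¹` direction on `ℝ²`. -/
noncomputable def pd1 (f : ℝ × ℝ → ℝ) (p : ℝ × ℝ) : ℝ := fderiv ℝ f p (1, 0)

/-- Partial derivative in the `x²` direction on `ℝ²`. -/
noncomputable def pd2 (f : ℝ × ℝ → ℝ) (p : ℝ × ℝ) : ℝ := fderiv ℝ f p (0, 1)

/-- `(V¹, V²)` satisfies the Killing system for `(f₁, f₂)`, i.e. `V = V¹E₁ + V²E₂` is a
Killing vector field for the metric `g = f₁⁻² dx¹⊗dx¹ + f₂⁻² dx²⊗dx²` on `ℝ²`. -/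
def KillingSystem (f₁ f₂ V₁ V₂ : ℝ × ℝ → ℝ) : Prop :=
  ∀ p : ℝ × ℝ,
    f₁ p * pd1 V₁ p - f₂ p / f₁ p * pd2 f₁ p * V₂ p = 0 ∧
    f₂ p * pd2 V₂ p - f₁ p / f₂ p * pd1 f₂ p * V₁ p = 0 ∧
    f₁ p * pd1 V₂ p + f₂ p * pd2 V₁ p + f₂ p / f₁ p * pd2 f₁ p * V₁ p
      + f₁ p / f₂ p * pd1 f₂ p * V₂ p = 0

lemma pd2_snd (W : ℝ → ℝ) (hW : Differentiable ℝ W) (p : ℝ × ℝ) :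
    pd2 (fun q : ℝ × ℝ => W q.2) p = deriv W p.2 := by
  have h : HasFDerivAt (fun q : ℝ × ℝ => W q.2)
      (((1 : ℝ →L[ℝ] ℝ).smulRight (deriv W p.2)).comp (ContinuousLinearMap.snd ℝ ℝ ℝ)) p :=
    ((hW p.2).hasDerivAt.hasFDerivAt).comp p (hasFDerivAt_snd)
  simp [pd2, h.fderiv]

lemma pd1_fst (W : ℝ → ℝ) (hW : Differentiable ℝ W) (p : ℝ × ℝ) :
    pd1 (fun q : ℝ × ℝ => W q.1) p = deriv W p.1 := by
  have h : HasFDerivAt (fun q : ℝ × ℝ => W q.1)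
      (((1 : ℝ →L[ℝ] ℝ).smulRight (deriv W p.1)).comp (ContinuousLinearMap.fst ℝ ℝ ℝ)) p :=
    ((hW p.1).hasDerivAt.hasFDerivAt).comp p (hasFDerivAt_fst)
  simp [pd1, h.fderiv]

/-- If `f₁ ≡ k₁ ≠ 0`, `f₂ ≡ k₂ ≠ 0`, `V¹ = W¹(x²)`, `V² = W²(x¹)` and `V` is a Killing
vector field, then `W¹(t) = k·k₁·t + c₁` and `W²(s) = −k·k₂·s + c₂`. -/
theorem killing_of_both_const_crossed (k₁ k₂ : ℝ) (hk₁ : k₁ ≠ 0) (hk₂ : k₂ ≠ 0)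
    (W₁ W₂ : ℝ → ℝ) (hW₁ : ContDiff ℝ (⊤ : ℕ∞) W₁) (hW₂ : ContDiff ℝ (⊤ : ℕ∞) W₂)
    (hK : KillingSystem (fun _ => k₁) (fun _ => k₂)
      (fun p => W₁ p.2) (fun p => W₂ p.1)) :
    ∃ k c₁ c₂ : ℝ, (∀ t, W₁ t = k * k₁ * t + c₁) ∧ (∀ s, W₂ s = -(k * k₂) * s + c₂) := by
  have hd₁ := hW₁.differentiable (by simp)
  have hd₂ := hW₂.differentiable (by simp)
  -- From (K3): k₁ * W₂'(s) + k₂ * W₁'(t) = 0 for all s, t.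
  have key : ∀ s t : ℝ, k₁ * deriv W₂ s + k₂ * deriv W₁ t = 0 := by
    intro s t
    have h := (hK (s, t)).2.2
    simp only [pd1_fst W₂ hd₂, pd2_snd W₁ hd₁] at h
    have hc1 : pd2 (fun _ : ℝ × ℝ => k₁) (s, t) = 0 := by simp [pd2]
    have hc2 : pd1 (fun _ : ℝ × ℝ => k₂) (s, t) = 0 := by simp [pd1]
    rw [hc1, hc2] at h
    linarith
  -- hence deriv W₁ is the constant (deriv W₁ 0)
  have hW₁' : ∀ t, deriv W₁ t = deriv W₁ 0 := by
    intro t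
    have h1 := key 0 t
    have h2 := key 0 0
    have h3 : k₂ * deriv W₁ t = k₂ * deriv W₁ 0 := by linarith
    exact mul_left_cancel₀ hk₂ h3
  have hW₂' : ∀ s, deriv W₂ s = -(k₂ / k₁) * deriv W₁ 0 := by
    intro s
    have h1 := key s 0
    field_simp
    linarith
  set k : ℝ := deriv W₁ 0 / k₁ with hk
  refine ⟨k, W₁ 0, W₂ 0, ?_, ?_⟩
  · intro t
    have : ∀ x, HasDerivAt (fun u => W₁ u - k * k₁ * u) 0 x := by
      intro x
      have h := ((hd₁ x).hasDerivAt).sub ((hasDerivAt_id x).const_mul (k * k₁))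
      have e : k * k₁ = deriv W₁ x := by
        rw [hW₁' x, hk]; field_simp
      exact h.congr_deriv (by rw [e]; ring)
    have hc := is_const_of_deriv_eq_zero (f := fun u => W₁ u - k * k₁ * u)
      (fun x => (this x).differentiableAt) (fun x => (this x).deriv) t 0
    simp at hc
    linarith
  · intro s
    have : ∀ x, HasDerivAt (fun u => W₂ u + (k * k₂) * u) 0 x := by
      intro x
      have h := ((hd₂ x).hasDerivAt).add ((hasDerivAt_id x).const_mul (k * k₂))
      have e : deriv W₂ x = -(k * k₂) := by
        rw [hW₂' x, hk]; ring
      rw [e] at h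
      exact h.congr_deriv (by ring)
    have hc := is_const_of_deriv_eq_zero (f := fun u => W₂ u + (k * k₂) * u)
      (fun x => (this x).differentiableAt) (fun x => (this x).deriv) s 0
    simp at hc
    linarith
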